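/- Let K, d ≥ 1 and M₁, M₂ ≥ 0. Let y ∈ ℝ^K be a one-hot vector, and for each n let ŷ^(n) ∈ ℝ^K be a probability vector, J^(n) a real K×d matrix with ‖J^(n)‖ ≤ M₁, and A_1^(n), …, A_K^(n) real symmetric d×d matrices with ‖A_k^(n)‖ ≤ M₂. Define H^(n) = (J^(n))ᵀ·(diag(ŷ^(n)) − ŷ^(n)(ŷ^(n))ᵀ)·J^(n) + ∑_{k=1}^K (ŷ^(n)_k − y_k)·A_k^(n). If ŷ^(n) → y as n → ∞, then ‖H^(n)‖ → 0; in particular the maximal eigenvalue of H^(n) converges to 0. -/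

import Mathlib

open Matrix Filter

/-- The ℓ²→ℓ² operator norm of a real rectangular matrix. -/
noncomputable def matOpNorm {m n : ℕ} (M : Matrix (Fin m) (Fin n) ℝ) : ℝ :=
  ‖LinearMap.toContinuousLinearMap (Matrix.toEuclideanLin M)‖

section AuxLemmas
open scoped Matrix.Norms.L2Operator

lemma matOpNorm_eq {m n : ℕ} (M : Matrix (Fin m) (Fin n) ℝ) : matOpNorm M = ‖M‖ := rfl

lemma matOpNorm_nonneg {m n : ℕ} (M : Matrix (Fin m) (Fin n) ℝ) : 0 ≤ matOpNorm M :=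
  norm_nonneg _

lemma matOpNorm_zero {m n : ℕ} : matOpNorm (0 : Matrix (Fin m) (Fin n) ℝ) = 0 := by
  rw [matOpNorm_eq]; exact norm_zero

lemma matOpNorm_transpose {m n : ℕ} (M : Matrix (Fin m) (Fin n) ℝ) :
    matOpNorm Mᵀ = matOpNorm M := by
  have h : Mᵀ = Mᴴ := by ext i j; simp [Matrix.conjTranspose_apply]
  rw [matOpNorm_eq, matOpNorm_eq, h, Matrix.l2_opNorm_conjTranspose]

lemma matOpNorm_mul_le {m n l : ℕ} (M : Matrix (Fin m) (Fin n) ℝ) (N : Matrix (Fin n) (Fin l) ℝ) :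
    matOpNorm (M * N) ≤ matOpNorm M * matOpNorm N := Matrix.l2_opNorm_mul M N

lemma matOpNorm_add_le {m n : ℕ} (M N : Matrix (Fin m) (Fin n) ℝ) :
    matOpNorm (M + N) ≤ matOpNorm M + matOpNorm N := norm_add_le M N

lemma matOpNorm_sum_smul_le {m n K : ℕ} (c : Fin K → ℝ) (A : Fin K → Matrix (Fin m) (Fin n) ℝ) :
    matOpNorm (∑ k, c k • A k) ≤ ∑ k, |c k| * matOpNorm (A k) := by
  rw [matOpNorm_eq]
  refine (norm_sum_le _ _).trans (Finset.sum_le_sum fun k _ => ?_)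
  rw [norm_smul, Real.norm_eq_abs, matOpNorm_eq]

lemma matOpNorm_continuous {m n : ℕ} :
    Continuous fun M : Matrix (Fin m) (Fin n) ℝ => matOpNorm M := by
  have hf : Continuous ⇑((Matrix.toEuclideanLin.trans LinearMap.toContinuousLinearMap :
      Matrix (Fin m) (Fin n) ℝ ≃ₗ[ℝ] _).toLinearMap) :=
    LinearMap.continuous_of_finiteDimensional _
  exact continuous_norm.comp hf

lemma eigenvalue_abs_le {d : ℕ} (M : Matrix (Fin d) (Fin d) ℝ) (hM : M.IsHermitian) (i : Fin d) :
    |hM.eigenvalues i| ≤ matOpNorm M := by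
  set v : EuclideanSpace ℝ (Fin d) := hM.eigenvectorBasis i
  have hv : ‖v‖ = 1 := hM.eigenvectorBasis.orthonormal.1 i
  have h1 : (LinearMap.toContinuousLinearMap (Matrix.toEuclideanLin M)) v
      = hM.eigenvalues i • v := by
    apply (WithLp.equiv 2 (Fin d → ℝ)).injective
    simpa [Matrix.toEuclideanLin_apply] using hM.mulVec_eigenvectorBasis i
  have h2 := (LinearMap.toContinuousLinearMap (Matrix.toEuclideanLin M)).le_opNorm v
  rw [h1, norm_smul, hv, Real.norm_eq_abs] at h2
  simp only [mul_one] at h2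
  exact h2

end AuxLemmas

/-- **Theorem (vanishing Hessian under interpolation).**
If `ŷ⁽ⁿ⁾ → y` (a one-hot vector) with uniformly bounded Jacobians `J⁽ⁿ⁾` and logit second
derivatives `A_k⁽ⁿ⁾`, then the operator norm of the cross-entropy parameter Hessian
`H⁽ⁿ⁾ = (J⁽ⁿ⁾)ᵀ(diag(ŷ⁽ⁿ⁾) − ŷ⁽ⁿ⁾(ŷ⁽ⁿ⁾)ᵀ)J⁽ⁿ⁾ + ∑_k (ŷ⁽ⁿ⁾_k − y_k)·A_k⁽ⁿ⁾` converges to 0;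
in particular the maximal eigenvalue of `H⁽ⁿ⁾` converges to 0. -/
theorem vanishing_hessian_under_interpolation
    (K d : ℕ) (hK : 1 ≤ K) (hd : 1 ≤ d) (M₁ M₂ : ℝ) (hM₁ : 0 ≤ M₁) (hM₂ : 0 ≤ M₂)
    (y : Fin K → ℝ) (hy : ∃ r : Fin K, y = fun k => if k = r then (1 : ℝ) else 0)
    (yhat : ℕ → Fin K → ℝ)
    (hpos : ∀ n k, 0 ≤ yhat n k) (hsum : ∀ n, ∑ k, yhat n k = 1)
    (J : ℕ → Matrix (Fin K) (Fin d) ℝ) (hJ : ∀ n, matOpNorm (J n) ≤ M₁)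
    (A : ℕ → Fin K → Matrix (Fin d) (Fin d) ℝ)
    (hAsymm : ∀ n k, (A n k).IsSymm)
    (hA : ∀ n k, matOpNorm (A n k) ≤ M₂)
    (H : ℕ → Matrix (Fin d) (Fin d) ℝ)
    (hH : ∀ n, H n = (J n)ᵀ * (Matrix.diagonal (yhat n)
          - Matrix.vecMulVec (yhat n) (yhat n)) * (J n)
        + ∑ k, (yhat n k - y k) • A n k)
    (hconv : ∀ k, Tendsto (fun n => yhat n k) atTop (nhds (y k))) :
    Tendsto (fun n => matOpNorm (H n)) atTop (nhds 0) ∧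
    ∀ (hHerm : ∀ n, (H n).IsHermitian),
      Tendsto (fun n => ⨆ i, (hHerm n).eigenvalues i) atTop (nhds 0) := by
  obtain ⟨r, hyr⟩ := hy
  set D : ℕ → Matrix (Fin K) (Fin K) ℝ :=
    fun n => Matrix.diagonal (yhat n) - Matrix.vecMulVec (yhat n) (yhat n) with hDdef
  -- D n → 0 entrywise, hence in norm
  have hDconv : Tendsto D atTop (nhds 0) := by
    refine tendsto_pi_nhds.2 ?_
    intro i
    rw [tendsto_pi_nhds]
    intro j
    have hlim : Tendsto (fun n => (if i = j then yhat n i else 0) - yhat n i * yhat n j)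
        atTop (nhds ((if i = j then y i else 0) - y i * y j)) := by
      have h1 : Tendsto (fun n => if i = j then yhat n i else 0) atTop
          (nhds (if i = j then y i else 0)) := by
        by_cases h : i = j
        · simpa [h] using hconv j
        · simp [h]
      exact h1.sub ((hconv i).mul (hconv j))
    have heq : ((if i = j then y i else 0) - y i * y j) = 0 := by
      subst hyr
      by_cases hij : i = j
      · subst hij
        by_cases hir : i = r <;> simp [hir]
      · simp only [hij, if_false, zero_sub, neg_eq_zero]
        by_cases hir : i = r
        · have : j ≠ r := fun h => hij (hir.trans h.symm)
          simp [hir, this]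
        · simp [hir]
    have : ∀ n, D n i j = (if i = j then yhat n i else 0) - yhat n i * yhat n j := by
      intro n
      simp [hDdef, Matrix.diagonal_apply, Matrix.vecMulVec_apply, Matrix.sub_apply]
    simp only [this, Pi.zero_apply]
    rwa [heq] at hlim
  have hDnorm : Tendsto (fun n => matOpNorm (D n)) atTop (nhds 0) := by
    have := (matOpNorm_continuous.tendsto 0).comp hDconv
    rwa [matOpNorm_zero] at this
  -- bounding function
  set b : ℕ → ℝ := fun n => M₁ * matOpNorm (D n) * M₁ + ∑ k, |yhat n k - y k| * M₂ with hbdef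
  have hbound : ∀ n, matOpNorm (H n) ≤ b n := by
    intro n
    rw [hH n]
    refine (matOpNorm_add_le _ _).trans (add_le_add ?_ ?_)
    · calc matOpNorm ((J n)ᵀ * D n * J n)
          ≤ matOpNorm ((J n)ᵀ * D n) * matOpNorm (J n) := matOpNorm_mul_le _ _
        _ ≤ (matOpNorm (J n)ᵀ * matOpNorm (D n)) * matOpNorm (J n) :=
            mul_le_mul_of_nonneg_right (matOpNorm_mul_le _ _) (matOpNorm_nonneg _)
        _ ≤ (M₁ * matOpNorm (D n)) * M₁ := by
            apply mul_le_mul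
            · exact mul_le_mul_of_nonneg_right (by rw [matOpNorm_transpose]; exact hJ n)
                (matOpNorm_nonneg _)
            · exact hJ n
            · exact matOpNorm_nonneg _
            · exact mul_nonneg hM₁ (matOpNorm_nonneg _)
    · refine (matOpNorm_sum_smul_le _ _).trans (Finset.sum_le_sum fun k _ => ?_)
      exact mul_le_mul_of_nonneg_left (hA n k) (abs_nonneg _)
  have hb0 : Tendsto b atTop (nhds 0) := by
    have h1 : Tendsto (fun n => M₁ * matOpNorm (D n) * M₁) atTop (nhds 0) := by
      have := (hDnorm.const_mul M₁).mul_const M₁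
      simpa using this
    have h2 : Tendsto (fun n => ∑ k, |yhat n k - y k| * M₂) atTop (nhds 0) := by
      have : Tendsto (fun n => ∑ k : Fin K, |yhat n k - y k| * M₂) atTop
          (nhds (∑ k : Fin K, (0 : ℝ))) := by
        refine tendsto_finset_sum _ fun k _ => ?_
        have h3 : Tendsto (fun n => yhat n k - y k) atTop (nhds 0) := by
          simpa using (hconv k).sub_const (y k)
        simpa using (h3.abs.mul_const M₂)
      simpa using this
    simpa using h1.add h2
  have hmain : Tendsto (fun n => matOpNorm (H n)) atTop (nhds 0) :=
    squeeze_zero (fun n => matOpNorm_nonneg _) hbound hb0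
  refine ⟨hmain, fun hHerm => ?_⟩
  have i0 : Fin d := ⟨0, hd⟩
  haveI : Nonempty (Fin d) := ⟨i0⟩
  have hub : ∀ n, (⨆ i, (hHerm n).eigenvalues i) ≤ matOpNorm (H n) := fun n =>
    ciSup_le fun i => (abs_le.1 (eigenvalue_abs_le _ (hHerm n) i)).2
  have hlb : ∀ n, -matOpNorm (H n) ≤ ⨆ i, (hHerm n).eigenvalues i := fun n =>
    le_trans (abs_le.1 (eigenvalue_abs_le _ (hHerm n) i0)).1
      (le_ciSup (Set.Finite.bddAbove (Set.finite_range _)) i0)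
  have hneg : Tendsto (fun n => -matOpNorm (H n)) atTop (nhds 0) := by simpa using hmain.neg
  exact tendsto_of_tendsto_of_tendsto_of_le_of_le hneg hmain hlb hub
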